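/- arXiv:2407.13279 — 3 statements merged into one kernel-verified Lean document; each statement's English description precedes it below -/
import Mathlib

section
/- Let γ ∈ (0,1). Consider the deterministic 3-state MDP with states s1, s2, s3 (s3 terminal), actions a1, a2, transitions s1 →(a1) s1, s1 →(a2) s2, s2 →(a1) s1, s2 →(a2) s3, and rewards r(s1,a1) = −1, r(s1,a2) = −1, r(s2,a1) = γ, r(s2,a2) = −1. With terminal state value 0, the deterministic policy π with π(s1) = a2, π(s2) = a1 uniquely maximizes the discounted state value at s1 among the four deterministic policies, with V_γ^π(s1) = −1, yet this policy makes s1 never reach the terminal state s3. -/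
inductive St | s1 | s2 | s3
  deriving DecidableEq

inductive Ac | a1 | a2
  deriving DecidableEq

open St Ac

/-- Deterministic transition: s1 →(a1) s1, s1 →(a2) s2, s2 →(a1) s1,
s2 →(a2) s3, s3 terminal (absorbing). -/
def step : St → Ac → St
  | s1, a1 => s1
  | s1, a2 => s2
  | s2, a1 => s1
  | s2, a2 => s3
  | s3, _ => s3

/-- Rewards: r(s1,a1) = −1, r(s1,a2) = −1, r(s2,a1) = γ, r(s2,a2) = −1,
and reward 0 at the terminal state (terminal state value 0). -/
def rew (γ : ℝ) : St → Ac → ℝ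
  | s1, a1 => -1
  | s1, a2 => -1
  | s2, a1 => γ
  | s2, a2 => -1
  | s3, _ => 0

/-- Trajectory under a deterministic policy. -/
def traj (π : St → Ac) (s : St) : ℕ → St := fun k => (fun t => step t (π t))^[k] s

/-- Discounted state value of a deterministic policy (terminal state value 0). -/
noncomputable def Vdisc (γ : ℝ) (π : St → Ac) (s : St) : ℝ :=
  ∑' k : ℕ, γ ^ k * rew γ (traj π s k) (π (traj π s k))

lemma vsummable (γ : ℝ) (h0 : 0 ≤ γ) (h1 : γ < 1) (π : St → Ac) (s : St) :
    Summable (fun k : ℕ => γ ^ k * rew γ (traj π s k) (π (traj π s k))) := by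
  apply Summable.of_norm_bounded (g := fun k : ℕ => γ ^ k)
  · exact summable_geometric_of_lt_one h0 h1
  · intro k
    rw [Real.norm_eq_abs, abs_mul, abs_pow, abs_of_nonneg h0]
    have habs : ∀ (t : St) (a : Ac), |rew γ t a| ≤ 1 := by
      intro t a
      cases t <;> cases a <;> simp [rew, abs_le] <;> constructor <;> linarith
    have : |rew γ (traj π s k) (π (traj π s k))| ≤ 1 := habs _ _
    calc γ ^ k * |rew γ (traj π s k) (π (traj π s k))| ≤ γ ^ k * 1 := by
          exact mul_le_mul_of_nonneg_left this (pow_nonneg h0 k)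
      _ = γ ^ k := mul_one _

lemma vdisc_rec (γ : ℝ) (h0 : 0 ≤ γ) (h1 : γ < 1) (π : St → Ac) (s : St) :
    Vdisc γ π s = rew γ s (π s) + γ * Vdisc γ π (step s (π s)) := by
  rw [Vdisc, Summable.tsum_eq_zero_add (vsummable γ h0 h1 π s)]
  simp only [pow_zero, one_mul]
  have h0' : traj π s 0 = s := rfl
  rw [h0']
  congr 1
  rw [Vdisc, ← tsum_mul_left]
  congr 1; ext k
  have : traj π s (k + 1) = traj π (step s (π s)) k := by
    simp [traj, Function.iterate_succ_apply]
  rw [this, pow_succ]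
  ring

lemma vdisc_s3 (γ : ℝ) (π : St → Ac) : Vdisc γ π s3 = 0 := by
  have h : ∀ k, traj π s3 k = s3 := fun k =>
    Function.iterate_fixed (by simp [step]) k
  rw [Vdisc]
  convert tsum_zero with k
  rw [h k]
  simp [rew]

theorem stmt_4 (γ : ℝ) (hγ : γ ∈ Set.Ioo (0 : ℝ) 1)
    (π : St → Ac) (hπ1 : π s1 = a2) (hπ2 : π s2 = a1) :
    Vdisc γ π s1 = -1 ∧
    (∀ π' : St → Ac, (π' s1, π' s2) ≠ (a2, a1) → Vdisc γ π' s1 < Vdisc γ π s1) ∧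
    (∀ k : ℕ, traj π s1 k ≠ s3) := by
  obtain ⟨hg0, hg1⟩ := hγ
  have h0 : (0:ℝ) ≤ γ := le_of_lt hg0
  have r1 := vdisc_rec γ h0 hg1 π s1
  have r2 := vdisc_rec γ h0 hg1 π s2
  rw [hπ1] at r1; rw [hπ2] at r2
  simp only [step, rew] at r1 r2
  -- r1 : Vdisc γ π s1 = -1 + γ * Vdisc γ π s2
  -- r2 : Vdisc γ π s2 = γ + γ * Vdisc γ π s1
  have key : (1 - γ * γ) * (Vdisc γ π s1 + 1) = 0 := by linear_combination r1 + γ * r2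
  have hne : (1 - γ * γ) ≠ 0 := by nlinarith
  have hV1 : Vdisc γ π s1 = -1 := by
    rcases mul_eq_zero.mp key with h | h
    · exact absurd h hne
    · linarith
  refine ⟨hV1, ?_, ?_⟩
  · intro π' hne
    have r1' := vdisc_rec γ h0 hg1 π' s1
    have r2' := vdisc_rec γ h0 hg1 π' s2
    rw [hV1]
    rcases h1 : π' s1 with _ | _ <;> rcases h2 : π' s2 with _ | _
    · rw [h1] at r1'; simp only [step, rew] at r1'
      nlinarith [r1']
    · rw [h1] at r1'; simp only [step, rew] at r1'
      nlinarith [r1']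
    · exact absurd (by rw [h1, h2]) hne
    · rw [h1] at r1'; rw [h2] at r2'
      simp only [step, rew] at r1' r2'
      rw [vdisc_s3] at r2'
      nlinarith [r1', r2']
  · intro k
    have : ∀ k, traj π s1 k = s1 ∨ traj π s1 k = s2 := by
      intro k
      induction k with
      | zero => left; rfl
      | succ n ih =>
        have hs : traj π s1 (n+1) = step (traj π s1 n) (π (traj π s1 n)) := by
          simp [traj, Function.iterate_succ_apply']
        rcases ih with h | h <;> rw [hs, h]
        · right; rw [hπ1]; rfl
        · left; rw [hπ2]; rfl
    rcases this k with h | h <;> rw [h] <;> simp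
end

section
/- Let γ ∈ (0,1) and r_min ≤ r_max be reals. Suppose (a_k)_{k≥0} satisfies r_min ≤ a_k for all k, (b_k)_{k≥0} satisfies b_k ≤ r_max for all k, and (p_k)_{k≥0} is a nondecreasing sequence in [0,1] with p_k ≥ δ > 0 for all k ≥ n (n ≥ 1 an integer). If C < (r_min − r_max)/(δ γ^{n} (1−γ)), then Σ_{k=0}^{∞} γ^k a_k > Σ_{k=0}^{∞} γ^k (1−p_k) b_k + C (1−γ) Σ_{k=0}^{∞} γ^k p_k, provided additionally that b_k ≥ 0 for all k or more generally Σ γ^k (1−p_k) b_k ≤ r_max/(1−γ). -/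
theorem stmt_9 (γ δ C rmin rmax : ℝ) (hγ : γ ∈ Set.Ioo (0 : ℝ) 1)
    (hδ : 0 < δ) (hr : rmin ≤ rmax)
    (n : ℕ) (hn : 1 ≤ n)
    (a b p : ℕ → ℝ)
    (ha : ∀ k, rmin ≤ a k) (hb : ∀ k, b k ≤ rmax)
    (hmono : Monotone p) (hp0 : ∀ k, 0 ≤ p k) (hp1 : ∀ k, p k ≤ 1)
    (hpδ : ∀ k ≥ n, δ ≤ p k)
    (hC : C < (rmin - rmax) / (δ * γ ^ n * (1 - γ)))
    (hsa : Summable (fun k => γ ^ k * a k))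
    (hsb : Summable (fun k => γ ^ k * (1 - p k) * b k))
    (hbnd : ∑' k : ℕ, γ ^ k * (1 - p k) * b k ≤ rmax / (1 - γ)) :
    ∑' k : ℕ, γ ^ k * a k >
      ∑' k : ℕ, γ ^ k * (1 - p k) * b k + C * ((1 - γ) * ∑' k : ℕ, γ ^ k * p k) := by
  obtain ⟨hγ0, hγ1⟩ := hγ
  have h1γ : 0 < 1 - γ := by linarith
  have hgeom : Summable (fun k : ℕ => γ ^ k) :=
    summable_geometric_of_lt_one (le_of_lt hγ0) hγ1
  have htg : ∑' k : ℕ, γ ^ k = (1 - γ)⁻¹ := tsum_geometric_of_lt_one (le_of_lt hγ0) hγ1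
  have hpow : ∀ k : ℕ, (0:ℝ) ≤ γ ^ k := fun k => pow_nonneg (le_of_lt hγ0) k
  -- summability of γ^k p k
  have hsp : Summable (fun k : ℕ => γ ^ k * p k) := by
    apply Summable.of_nonneg_of_le (fun k => mul_nonneg (hpow k) (hp0 k))
      (fun k => ?_) hgeom
    calc γ ^ k * p k ≤ γ ^ k * 1 := mul_le_mul_of_nonneg_left (hp1 k) (hpow k)
      _ = γ ^ k := mul_one _
  -- lower bound on Sa
  have hSa : rmin * (1 - γ)⁻¹ ≤ ∑' k : ℕ, γ ^ k * a k := by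
    have h1 : ∀ k : ℕ, γ ^ k * rmin ≤ γ ^ k * a k :=
      fun k => mul_le_mul_of_nonneg_left (ha k) (hpow k)
    have h2 : Summable (fun k : ℕ => γ ^ k * rmin) := hgeom.mul_right rmin
    have h3 := Summable.tsum_le_tsum h1 h2 hsa
    rwa [tsum_mul_right, htg, mul_comm] at h3
  -- lower bound on Sp
  have hSp : δ * γ ^ n * (1 - γ)⁻¹ ≤ ∑' k : ℕ, γ ^ k * p k := by
    have hsp' : Summable (fun k : ℕ => γ ^ (k + n) * p (k + n)) :=
      (summable_nat_add_iff n).mpr hsp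
    have heq : (fun k : ℕ => γ ^ n * δ * γ ^ k) = (fun k : ℕ => δ * γ ^ (k + n)) := by
      funext k; rw [pow_add]; ring
    have hsd : Summable (fun k : ℕ => δ * γ ^ (k + n)) := by
      rw [← heq]; exact hgeom.mul_left _
    have h1 : ∀ k : ℕ, δ * γ ^ (k + n) ≤ γ ^ (k + n) * p (k + n) := by
      intro k
      rw [mul_comm]
      exact mul_le_mul_of_nonneg_left (hpδ (k + n) (Nat.le_add_left n k)) (hpow _)
    have h2 := Summable.tsum_le_tsum h1 hsd hsp'
    have h3 : ∑' k : ℕ, δ * γ ^ (k + n) = δ * γ ^ n * (1 - γ)⁻¹ := by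
      rw [← heq, tsum_mul_left, htg]; ring
    have h4 := hsp.sum_add_tsum_nat_add n
    have h5 : 0 ≤ ∑ i ∈ Finset.range n, γ ^ i * p i :=
      Finset.sum_nonneg fun i _ => mul_nonneg (hpow i) (hp0 i)
    calc δ * γ ^ n * (1 - γ)⁻¹ = ∑' k : ℕ, δ * γ ^ (k + n) := h3.symm
      _ ≤ ∑' k : ℕ, γ ^ (k + n) * p (k + n) := h2
      _ ≤ ∑' k : ℕ, γ ^ k * p k := by linarith [h4]
  -- C is negative
  have hδγ : 0 < δ * γ ^ n := mul_pos hδ (pow_pos hγ0 n)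
  have hC0 : C < 0 := by
    have : (rmin - rmax) / (δ * γ ^ n * (1 - γ)) ≤ 0 :=
      div_nonpos_iff.mpr (Or.inr ⟨by linarith, le_of_lt (mul_pos hδγ h1γ)⟩)
    linarith
  -- the key term bound
  have hterm : C * ((1 - γ) * ∑' k : ℕ, γ ^ k * p k) ≤ C * (δ * γ ^ n) := by
    apply mul_le_mul_of_nonpos_left _ (le_of_lt hC0)
    calc δ * γ ^ n = (1 - γ) * (δ * γ ^ n * (1 - γ)⁻¹) := by
          field_simp
      _ ≤ (1 - γ) * ∑' k : ℕ, γ ^ k * p k :=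
          mul_le_mul_of_nonneg_left hSp (le_of_lt h1γ)
  have hCδ : C * (δ * γ ^ n) < (rmin - rmax) / (1 - γ) := by
    have := (mul_lt_mul_of_pos_right hC hδγ)
    calc C * (δ * γ ^ n) < (rmin - rmax) / (δ * γ ^ n * (1 - γ)) * (δ * γ ^ n) := this
      _ = (rmin - rmax) / (1 - γ) := by field_simp
  have hdiv1 : rmax / (1 - γ) + (rmin - rmax) / (1 - γ) = rmin * (1 - γ)⁻¹ := by
    field_simp
    ring
  linarith
end

section
/- Let γ ∈ (0,1), n ≥ 1 an integer, δ ∈ (0,1], and r_min ≤ r_max < 0 reals. Suppose (a_k) with a_k ≤ r_max for all k, (b_k) with b_k ≥ r_min for all k, and (p_k) a nondecreasing sequence in [0,1] with p_k ≥ δ for k ≥ n. If C > (r_max − r_min)/(δ γ^{n} (1−γ)), then Σ_{k=0}^{∞} γ^k a_k < Σ_{k=0}^{∞} γ^k (1−p_k) b_k + C (1−γ) Σ_{k=0}^{∞} γ^k p_k. -/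
theorem stmt_10 (γ δ C rmin rmax : ℝ) (hγ : γ ∈ Set.Ioo (0 : ℝ) 1)
    (hδ : δ ∈ Set.Ioc (0 : ℝ) 1) (hr : rmin ≤ rmax) (hrneg : rmax < 0)
    (n : ℕ) (hn : 1 ≤ n)
    (a b p : ℕ → ℝ)
    (ha : ∀ k, a k ≤ rmax) (hb : ∀ k, rmin ≤ b k)
    (hmono : Monotone p) (hp0 : ∀ k, 0 ≤ p k) (hp1 : ∀ k, p k ≤ 1)
    (hpδ : ∀ k ≥ n, δ ≤ p k)
    (hC : C > (rmax - rmin) / (δ * γ ^ n * (1 - γ)))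
    (hsa : Summable (fun k => γ ^ k * a k))
    (hsb : Summable (fun k => γ ^ k * (1 - p k) * b k)) :
    ∑' k : ℕ, γ ^ k * a k <
      ∑' k : ℕ, γ ^ k * (1 - p k) * b k + C * ((1 - γ) * ∑' k : ℕ, γ ^ k * p k) := by
  obtain ⟨hγ0, hγ1⟩ := hγ
  obtain ⟨hδ0, hδ1⟩ := hδ
  have h1γ : (0:ℝ) < 1 - γ := by linarith
  have hgeo : Summable (fun k : ℕ => γ ^ k) :=
    summable_geometric_of_lt_one hγ0.le hγ1
  have hγk : ∀ k : ℕ, (0:ℝ) < γ ^ k := fun k => pow_pos hγ0 k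
  have hCpos : 0 < C :=
    lt_of_le_of_lt (div_nonneg (by linarith) (by positivity)) hC
  have htg : ∑' k : ℕ, γ ^ k = (1 - γ)⁻¹ := tsum_geometric_of_lt_one hγ0.le hγ1
  -- LHS bound
  have hA : ∑' k : ℕ, γ ^ k * a k ≤ rmax * (1 - γ)⁻¹ := by
    have h1 : ∑' k : ℕ, γ ^ k * a k ≤ ∑' k : ℕ, γ ^ k * rmax := by
      refine Summable.tsum_le_tsum (fun k => ?_) hsa (hgeo.mul_right rmax)
      exact mul_le_mul_of_nonneg_left (ha k) (hγk k).le
    rwa [tsum_mul_right, htg, mul_comm] at h1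
  -- b-term lower bound
  have hB : rmin * (1 - γ)⁻¹ ≤ ∑' k : ℕ, γ ^ k * (1 - p k) * b k := by
    have h1 : ∑' k : ℕ, γ ^ k * rmin ≤ ∑' k : ℕ, γ ^ k * (1 - p k) * b k := by
      refine Summable.tsum_le_tsum (fun k => ?_) (hgeo.mul_right rmin) hsb
      have hkey : rmin ≤ (1 - p k) * b k := by
        rcases le_or_gt 0 (b k) with h | h
        · have : 0 ≤ (1 - p k) * b k := mul_nonneg (by linarith [hp1 k]) h
          linarith
        · nlinarith [hb k, hp0 k, hp1 k]
      calc γ ^ k * rmin ≤ γ ^ k * ((1 - p k) * b k) :=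
            mul_le_mul_of_nonneg_left hkey (hγk k).le
        _ = γ ^ k * (1 - p k) * b k := by ring
    rwa [tsum_mul_right, htg, mul_comm] at h1
  -- p-term lower bound
  have hP : Summable (fun k : ℕ => γ ^ k * p k) := by
    refine Summable.of_nonneg_of_le (fun k => mul_nonneg (hγk k).le (hp0 k))
      (fun k => ?_) hgeo
    nlinarith [hγk k, hp1 k]
  have hStail : δ * γ ^ n * (1 - γ)⁻¹ ≤ ∑' k : ℕ, γ ^ (k + n) * p (k + n) := by
    have h1 : ∑' k : ℕ, γ ^ k * (γ ^ n * δ) ≤ ∑' k : ℕ, γ ^ (k + n) * p (k + n) := by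
      refine Summable.tsum_le_tsum (fun k => ?_) (hgeo.mul_right _) ?_
      · rw [pow_add]
        calc γ ^ k * (γ ^ n * δ) = γ ^ k * γ ^ n * δ := by ring
          _ ≤ γ ^ k * γ ^ n * p (k + n) :=
            mul_le_mul_of_nonneg_left (hpδ (k + n) (Nat.le_add_left n k)) (by positivity)
      · exact (summable_nat_add_iff n).mpr hP
    rw [tsum_mul_right, htg] at h1
    linarith [h1]
  have hS : δ * γ ^ n * (1 - γ)⁻¹ ≤ ∑' k : ℕ, γ ^ k * p k := by
    have hsplit := Summable.sum_add_tsum_nat_add (f := fun k : ℕ => γ ^ k * p k) n hP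
    have hfin : (0:ℝ) ≤ ∑ i ∈ Finset.range n, γ ^ i * p i :=
      Finset.sum_nonneg fun i _ => mul_nonneg (hγk i).le (hp0 i)
    have := hStail
    linarith [hsplit, hStail]
  -- key numeric inequality
  have hkey : rmax * (1 - γ)⁻¹ < rmin * (1 - γ)⁻¹ + C * (δ * γ ^ n) := by
    have hd : 0 < δ * γ ^ n * (1 - γ) := by positivity
    rw [gt_iff_lt, div_lt_iff₀ hd] at hC
    have h2 : rmax < rmin + C * (δ * γ ^ n) * (1 - γ) := by nlinarith
    calc rmax * (1 - γ)⁻¹ < (rmin + C * (δ * γ ^ n) * (1 - γ)) * (1 - γ)⁻¹ :=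
          mul_lt_mul_of_pos_right h2 (inv_pos.mpr h1γ)
      _ = rmin * (1 - γ)⁻¹ + C * (δ * γ ^ n) := by field_simp
  have hCS : C * (δ * γ ^ n) ≤ C * ((1 - γ) * ∑' k : ℕ, γ ^ k * p k) := by
    refine mul_le_mul_of_nonneg_left ?_ hCpos.le
    have : δ * γ ^ n = (1 - γ) * (δ * γ ^ n * (1 - γ)⁻¹) := by
      field_simp
    rw [this]
    exact mul_le_mul_of_nonneg_left hS h1γ.le
  linarith
end
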